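/- arXiv:2509.17709 — 2 statements merged into one kernel-verified Lean document; each statement's English description precedes it below -/
import Mathlib

section
/- In a cyclic group G of prime order p with generator G₀ and a bilinear pairing e: G × G̃ → G_T into groups of order p, if A = G₀^r with r ≠ 0, B = A^(x₁ + Σ_j m_j·y_{j,1}), C = A^(x₂ + Σ_j m_j·y_{j,2}), H̃ ∈ G̃, D̃ = H̃^d, Ũ = H̃^(x₂ - d·x₁), and Ṽ_j = H̃^(y_{j,2} - d·y_{j,1}) for j ∈ [ℓ], then e(A, Ũ · Π_j Ṽ_j^{m_j}) · e(B, D̃) = e(C, H̃). -/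
/-! By bilinearity every pairing in the verification equation is a power of `e G₀ H` with a
natural-number exponent. The two sides' exponents agree modulo `p = Nat.card GT`, because the
`d`-terms of `Ũ · Π Ṽⱼ^{mⱼ}` cancel against those of `e(B, D̃)`. -/

theorem pow_eq_pow_of_natCast_eq {M : Type*} [Group M] (x : M) {a b : ℕ}
    (hab : (a : ZMod (Nat.card M)) = b) : x ^ a = x ^ b :=
  pow_eq_pow_iff_modEq.mpr <|
    ((ZMod.natCast_eq_natCast_iff a b _).mp hab).of_dvd (orderOf_dvd_natCard x)

theorem ds_ck20_exponent_eq {R ι : Type*} [CommRing R] [Fintype ι]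
    (d x₁ x₂ : R) (m y₁ y₂ : ι → R) :
    (x₂ - d * x₁) + ∑ j, (y₂ j - d * y₁ j) * m j + (x₁ + ∑ j, m j * y₁ j) * d
      = x₂ + ∑ j, m j * y₂ j := by
  have hsum : ∑ j, (y₂ j - d * y₁ j) * m j = ∑ j, m j * y₂ j - d * ∑ j, m j * y₁ j := by
    rw [Finset.mul_sum, ← Finset.sum_sub_distrib]
    exact Finset.sum_congr rfl fun j _ => by ring
  rw [hsum]
  ring

theorem ds_ck20_verification_correct_general
    (p : ℕ) [Fact p.Prime] (ℓ : ℕ)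
    (G G' GT : Type*) [CommGroup G] [CommGroup G'] [CommGroup GT]
    (hGT : Nat.card GT = p)
    (e : G → G' → GT)
    (hbil : ∀ (X : G) (Y : G') (a b : ℕ), e (X ^ a) (Y ^ b) = (e X Y) ^ (a * b))
    (G₀ : G)
    (r d x₁ x₂ : ZMod p) (m y₁ y₂ : Fin ℓ → ZMod p)
    (A B C : G) (H D U : G') (V : Fin ℓ → G')
    (hA : A = G₀ ^ r.val)
    (hB : B = A ^ (x₁ + ∑ j, m j * y₁ j).val)
    (hC : C = A ^ (x₂ + ∑ j, m j * y₂ j).val)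
    (hD : D = H ^ d.val)
    (hU : U = H ^ (x₂ - d * x₁).val)
    (hV : ∀ j, V j = H ^ (y₂ j - d * y₁ j).val) :
    e A (U * ∏ j, (V j) ^ (m j).val) * e B D = e C H := by
  have hUV : U * ∏ j, (V j) ^ (m j).val
      = H ^ ((x₂ - d * x₁).val + ∑ j, (y₂ j - d * y₁ j).val * (m j).val) := by
    simp only [hU, hV, ← pow_mul, Finset.prod_pow_eq_pow_sum, pow_add]
  have hCH : e C H = e G₀ H ^ (r.val * (x₂ + ∑ j, m j * y₂ j).val) := by
    simpa [hC, hA, ← pow_mul] using hbil G₀ H (r.val * (x₂ + ∑ j, m j * y₂ j).val) 1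
  rw [hUV, hB, hD, hA, ← pow_mul, hbil, hbil, ← pow_add, hCH]
  refine pow_eq_pow_of_natCast_eq _ ?_
  rw [hGT]
  push_cast
  simp only [ZMod.natCast_zmod_val]
  linear_combination r * ds_ck20_exponent_eq d x₁ x₂ m y₁ y₂

/-- Correctness of the verification equation of DS_CK20: in a type-3 bilinear
group of prime order `p`, a signature `(A, B, C)` produced with secret key
`(x₁, x₂, (y_{j,1}, y_{j,2})_j)` on message `(m_j)_j` verifies. -/
theorem ds_ck20_verification_correct
    (p : ℕ) [Fact p.Prime] (ℓ : ℕ)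
    (G G' GT : Type*) [CommGroup G] [CommGroup G'] [CommGroup GT]
    (hG : Nat.card G = p) (hG' : Nat.card G' = p) (hGT : Nat.card GT = p)
    (e : G → G' → GT)
    (hl : ∀ X X' Y, e (X * X') Y = e X Y * e X' Y)
    (hr : ∀ X Y Y', e X (Y * Y') = e X Y * e X Y')
    (hbil : ∀ (X : G) (Y : G') (a b : ℕ), e (X ^ a) (Y ^ b) = (e X Y) ^ (a * b))
    (G₀ : G) (hgen : ∀ x : G, x ∈ Subgroup.zpowers G₀)
    (r d x₁ x₂ : ZMod p) (m y₁ y₂ : Fin ℓ → ZMod p)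
    (hr0 : r ≠ 0)
    (A B C : G) (H D U : G') (V : Fin ℓ → G')
    (hA : A = G₀ ^ r.val)
    (hB : B = A ^ (x₁ + ∑ j, m j * y₁ j).val)
    (hC : C = A ^ (x₂ + ∑ j, m j * y₂ j).val)
    (hD : D = H ^ d.val)
    (hU : U = H ^ (x₂ - d * x₁).val)
    (hV : ∀ j, V j = H ^ (y₂ j - d * y₁ j).val) :
    e A (U * ∏ j, (V j) ^ (m j).val) * e B D = e C H :=
  ds_ck20_verification_correct_general p ℓ G G' GT hGT e hbil G₀ r d x₁ x₂ m y₁ y₂ A B C H D U V hA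
    hB hC hD hU hV
end

section
/- In a cyclic group G of prime order p, suppose B_{n-1} ≠ A_{n-1}^{x₁ + S} (with A_{n-1} ≠ 1), where S = Σ_{i∈[n-1]} Σ_{j∈[ℓ]} m_{i,j} y_{i,j,1}, but the pairing verification e(A_{n-1}, Ũ Π_{i,j} Ṽ_{i,j}^{m_{i,j}}) · e(B_{n-1}, D̃) = e(C_{n-1}, H̃) holds with Ũ = H̃^{x₂ - d x₁}, Ṽ_{i,j} = H̃^{y_{i,j,2} - d y_{i,j,1}}, H̃ ≠ 1. Then the pair (E, F) := (C_{n-1}^{-1} · A_{n-1}^{x₂ + Σ_{i,j} m_{i,j} y_{i,j,2}}, B_{n-1} · A_{n-1}^{-x₁ - S}) satisfies e(E, H̃) · e(F, D̃) = 1_{G_T} and (E, F) ≠ (1_G, 1_G). -/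
/-! The verification equation says `e(C, H̃) = e(A, H̃)^K · e(B, D̃)` with `K ≡ t - d s (mod p)`,
where `s = x₁ + Σ m y₁` and `t = x₂ + Σ m y₂`. Dividing it out of `e(E, H̃) · e(F, D̃)` leaves
`e(A, H̃)^(t - K - s d)`, which is `1` because `e(A, H̃)` has order dividing `p`. Nontriviality is
immediate: `F = 1` would say `B = A^s`, which is exactly the excluded event. -/

open Finset

theorem pow_eq_pow_of_natCast_eq_s16 {M : Type*} [Monoid M] {p : ℕ} {g : M} (hg : g ^ p = 1)
    {a b : ℕ} (h : (a : ZMod p) = b) : g ^ a = g ^ b := by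
  rw [pow_eq_pow_mod a hg, pow_eq_pow_mod b hg, (ZMod.natCast_eq_natCast_iff' a b p).mp h]

theorem map_inv_left_of_map_mul_left {G G' GT : Type*} [Group G] [Group GT] {e : G → G' → GT}
    (hml : ∀ X X' Y, e (X * X') Y = e X Y * e X' Y) (X : G) (Y : G') :
    e X⁻¹ Y = (e X Y)⁻¹ :=
  map_inv (MonoidHom.mk' (e · Y) (hml · · Y)) X

theorem dbp_solution_extraction_general
    (p : ℕ) [Fact p.Prime] (n ℓ : ℕ)
    (G G' GT : Type*) [CommGroup G] [CommGroup G'] [CommGroup GT]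
    (hGT : Nat.card GT = p)
    (e : G → G' → GT)
    (hml : ∀ X X' Y, e (X * X') Y = e X Y * e X' Y)
    (hbil : ∀ (X : G) (Y : G') (x y : ℕ), e (X ^ x) (Y ^ y) = (e X Y) ^ (x * y))
    (d x₁ x₂ : ZMod p) (m y₁ y₂ : Fin n → Fin ℓ → ZMod p)
    (A B C : G) (H D U : G') (V : Fin n → Fin ℓ → G')
    (hD : D = H ^ d.val)
    (hU : U = H ^ (x₂ - d * x₁).val)
    (hV : ∀ i j, V i j = H ^ ((y₂ i j) - d * (y₁ i j)).val)
    (hBad : B ≠ A ^ (x₁ + ∑ i, ∑ j, m i j * y₁ i j).val)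
    (hver : e A (U * ∏ i, ∏ j, (V i j) ^ (m i j).val) * e B D = e C H) :
    e (C⁻¹ * A ^ (x₂ + ∑ i, ∑ j, m i j * y₂ i j).val) H *
      e (B * (A ^ (x₁ + ∑ i, ∑ j, m i j * y₁ i j).val)⁻¹) D = 1 ∧
    ¬(C⁻¹ * A ^ (x₂ + ∑ i, ∑ j, m i j * y₂ i j).val = 1 ∧
      B * (A ^ (x₁ + ∑ i, ∑ j, m i j * y₁ i j).val)⁻¹ = 1) := by
  set s := x₁ + ∑ i, ∑ j, m i j * y₁ i j
  set t := x₂ + ∑ i, ∑ j, m i j * y₂ i j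
  set K := (x₂ - d * x₁).val + ∑ i, ∑ j, (y₂ i j - d * y₁ i j).val * (m i j).val
  have hW : U * ∏ i, ∏ j, V i j ^ (m i j).val = H ^ K := by
    simp only [K, hU, hV, pow_add, ← pow_mul, prod_pow_eq_pow_sum]
  have hK : (t.val : ZMod p) = (K + s.val * d.val : ℕ) := by
    push_cast [t, s, K, ZMod.natCast_val, ZMod.cast_id', id]
    simp only [sub_mul, sum_sub_distrib, mul_assoc, ← mul_sum, mul_comm (y₂ _ _), mul_comm (y₁ _ _)]
    ring
  have hord : e A H ^ p = 1 := hGT ▸ pow_card_eq_one'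
  have hkey : e (A ^ t.val) H = e A (H ^ K) * e (A ^ s.val) D :=
    calc e (A ^ t.val) H = e A H ^ t.val := by simpa using hbil A H t.val 1
      _ = e A H ^ (K + s.val * d.val) := pow_eq_pow_of_natCast_eq_s16 hord hK
      _ = e A (H ^ K) * e (A ^ s.val) D := by
        rw [pow_add, hD, hbil]
        simpa using (hbil A H 1 K).symm
  refine ⟨?_, fun ⟨_, hF⟩ => hBad (mul_inv_eq_one.mp hF)⟩
  rw [hml, hml, map_inv_left_of_map_mul_left hml, map_inv_left_of_map_mul_left hml, hkey, ← hW,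
    ← hver]
  simp [mul_comm, mul_left_comm]

/-- DBP-solution extraction in Lemma 2: if the verification equation holds but
`B_{n-1} ≠ A_{n-1}^{x₁+S}` (event Bad), then
`(E, F) = (C_{n-1}⁻¹·A_{n-1}^{x₂+Σ m y₂}, B_{n-1}·A_{n-1}^{-x₁-S})` is a
nontrivial solution to the double-pairing problem for `(H̃, D̃)`. -/
theorem dbp_solution_extraction
    (p : ℕ) [Fact p.Prime] (n ℓ : ℕ)
    (G G' GT : Type*) [CommGroup G] [CommGroup G'] [CommGroup GT]
    (hG : Nat.card G = p) (hG' : Nat.card G' = p) (hGT : Nat.card GT = p)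
    (e : G → G' → GT)
    (hml : ∀ X X' Y, e (X * X') Y = e X Y * e X' Y)
    (hmr : ∀ X Y Y', e X (Y * Y') = e X Y * e X Y')
    (hbil : ∀ (X : G) (Y : G') (x y : ℕ), e (X ^ x) (Y ^ y) = (e X Y) ^ (x * y))
    (d x₁ x₂ : ZMod p) (m y₁ y₂ : Fin n → Fin ℓ → ZMod p)
    (A B C : G) (H D U : G') (V : Fin n → Fin ℓ → G')
    (hAne : A ≠ 1) (hH : H ≠ 1)
    (hD : D = H ^ d.val)
    (hU : U = H ^ (x₂ - d * x₁).val)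
    (hV : ∀ i j, V i j = H ^ ((y₂ i j) - d * (y₁ i j)).val)
    (hBad : B ≠ A ^ (x₁ + ∑ i, ∑ j, m i j * y₁ i j).val)
    (hver : e A (U * ∏ i, ∏ j, (V i j) ^ (m i j).val) * e B D = e C H) :
    e (C⁻¹ * A ^ (x₂ + ∑ i, ∑ j, m i j * y₂ i j).val) H *
      e (B * (A ^ (x₁ + ∑ i, ∑ j, m i j * y₁ i j).val)⁻¹) D = 1 ∧
    ¬(C⁻¹ * A ^ (x₂ + ∑ i, ∑ j, m i j * y₂ i j).val = 1 ∧
      B * (A ^ (x₁ + ∑ i, ∑ j, m i j * y₁ i j).val)⁻¹ = 1) :=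
  dbp_solution_extraction_general p n ℓ G G' GT hGT e hml hbil d x₁ x₂ m y₁ y₂ A B C H D U V hD hU
    hV hBad hver
end
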